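/- arXiv:2210.05371 — 3 statements merged into one kernel-verified Lean document; each statement's English description precedes it below -/
import Mathlib

section
/- Let F : ℝ^p → ℝ^m be differentiable and γ : ℝ^m → ℝ≥0 be differentiable and μ-PL over F(S) for a set S ⊆ ℝ^p, with infimum γ*_S over F(S). Let λ(θ) denote the smallest eigenvalue of DF(θ)DF(θ)^T. Then for ℓ := γ ∘ F and all θ ∈ S, ‖∇ℓ(θ)‖² ≥ μ λ(θ) (ℓ(θ) - γ*_S). -/
open InnerProductSpace in
theorem stmt2 {p m : ℕ} (hm : 0 < m)
    (F : EuclideanSpace ℝ (Fin p) → EuclideanSpace ℝ (Fin m))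
    (γ : EuclideanSpace ℝ (Fin m) → ℝ) (S : Set (EuclideanSpace ℝ (Fin p)))
    (μ γstar : ℝ) (hμ : 0 < μ) (hS : S.Nonempty)
    (hF : Differentiable ℝ F) (hγ : Differentiable ℝ γ) (hγnn : ∀ z, 0 ≤ γ z)
    (hγstar : γstar = ⨅ z : (F '' S), γ z)
    (hPL : ∀ z ∈ F '' S, μ * (γ z - γstar) ≤ ‖gradient γ z‖ ^ 2)
    (lam : EuclideanSpace ℝ (Fin p) → ℝ)
    (hlam : ∀ θ, IsLeast
      {r | ∃ u : EuclideanSpace ℝ (Fin m), ‖u‖ = 1 ∧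
        r = ‖ContinuousLinearMap.adjoint (fderiv ℝ F θ) u‖ ^ 2} (lam θ)) :
    ∀ θ ∈ S, μ * lam θ * (γ (F θ) - γstar) ≤ ‖gradient (γ ∘ F) θ‖ ^ 2 := by
  intro θ hθ
  set A := fderiv ℝ F θ
  set v := gradient γ (F θ)
  -- gradient of composition
  have hgrad : gradient (γ ∘ F) θ = ContinuousLinearMap.adjoint A v := by
    apply ext_inner_right ℝ
    intro w
    rw [ContinuousLinearMap.adjoint_inner_left]
    show ⟪(toDual ℝ _).symm (fderiv ℝ (γ ∘ F) θ), w⟫_ℝ = ⟪v, A w⟫_ℝ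
    rw [toDual_symm_apply, fderiv_comp θ (hγ (F θ)) (hF θ)]
    show fderiv ℝ γ (F θ) (A w) = _
    rw [show (⟪v, A w⟫_ℝ) = fderiv ℝ γ (F θ) (A w) from toDual_symm_apply]
  -- lam θ properties
  obtain ⟨⟨u, hu1, hu2⟩, hleast⟩ := hlam θ
  have hlamnn : 0 ≤ lam θ := hu2 ▸ sq_nonneg _
  -- lam θ * ‖v‖² ≤ ‖A† v‖²
  have hkey : lam θ * ‖v‖ ^ 2 ≤ ‖ContinuousLinearMap.adjoint A v‖ ^ 2 := by
    rcases eq_or_ne v 0 with hv | hv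
    · simp [hv]
    · have hvn : (0:ℝ) < ‖v‖ := norm_pos_iff.mpr hv
      have : lam θ ≤ ‖ContinuousLinearMap.adjoint A ((‖v‖)⁻¹ • v)‖ ^ 2 :=
        hleast ⟨(‖v‖)⁻¹ • v, by simp [norm_smul, abs_of_pos hvn, inv_mul_cancel₀ hvn.ne'], rfl⟩
      rw [map_smul, norm_smul, mul_pow, norm_inv, norm_norm] at this
      calc lam θ * ‖v‖ ^ 2 ≤ (‖v‖⁻¹ ^ 2 * ‖ContinuousLinearMap.adjoint A v‖ ^ 2) * ‖v‖ ^ 2 :=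
            mul_le_mul_of_nonneg_right this (sq_nonneg _)
        _ = ‖ContinuousLinearMap.adjoint A v‖ ^ 2 := by
            field_simp
  -- γstar ≤ γ (F θ)
  have hγle : γstar ≤ γ (F θ) := by
    rw [hγstar]
    exact ciInf_le ⟨0, fun x hx => hx.elim fun z hz => hz ▸ hγnn z⟩ (⟨F θ, ⟨θ, hθ, rfl⟩⟩ : (F '' S))
  have hPLθ := hPL (F θ) ⟨θ, hθ, rfl⟩
  rw [hgrad]
  calc μ * lam θ * (γ (F θ) - γstar) = lam θ * (μ * (γ (F θ) - γstar)) := by ring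
    _ ≤ lam θ * ‖v‖ ^ 2 := mul_le_mul_of_nonneg_left hPLθ hlamnn
    _ ≤ _ := hkey
end

section
/- Let I : ℝ^{d₀} → ℝ^{d₁} be a linear map all of whose singular values equal 1, and let g : ℝ^p × ℝ^{d₀} → ℝ^{d₁} be differentiable in the second variable with ‖J g(θ, x)‖₂ < 1 − δ for all (θ, x), where Jg is the Jacobian in x. Then the residual map f(θ, x) := I x + g(θ, x) satisfies σ_min(J f(θ, x)) > δ for all (θ, x). -/
/-- The smallest singular value of a linear map into a space of no larger dimension,
i.e. the square root of the smallest eigenvalue of `L ∘ Lᵀ`, as the infimum of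
`‖Lᵀ y‖` over unit vectors `y` in the codomain. -/
noncomputable def sminAdj {n m : ℕ}
    (L : EuclideanSpace ℝ (Fin n) →L[ℝ] EuclideanSpace ℝ (Fin m)) : ℝ :=
  ⨅ y : Metric.sphere (0 : EuclideanSpace ℝ (Fin m)) 1,
    ‖ContinuousLinearMap.adjoint L (y : EuclideanSpace ℝ (Fin m))‖

open ContinuousLinearMap

theorem le_sminAdj {n m : ℕ} (hm : 0 < m)
    {L : EuclideanSpace ℝ (Fin n) →L[ℝ] EuclideanSpace ℝ (Fin m)} {c : ℝ}
    (h : ∀ y : EuclideanSpace ℝ (Fin m), ‖y‖ = 1 → c ≤ ‖adjoint L y‖) : c ≤ sminAdj L := by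
  have : NeZero m := ⟨hm.ne'⟩
  have : Nonempty (Metric.sphere (0 : EuclideanSpace ℝ (Fin m)) 1) :=
    (NormedSpace.sphere_nonempty.mpr zero_le_one).to_subtype
  exact le_ciInf fun ⟨y, hy⟩ => h y (by simpa using hy)

theorem one_sub_opNorm_mul_norm_le_norm_adjoint_add_apply
    {𝕜 E F : Type*} [RCLike 𝕜] [NormedAddCommGroup E] [InnerProductSpace 𝕜 E] [CompleteSpace E]
    [NormedAddCommGroup F] [InnerProductSpace 𝕜 F] [CompleteSpace F]
    {I : E →L[𝕜] F} (hI : ∀ y, ‖adjoint I y‖ = ‖y‖) (B : E →L[𝕜] F) (y : F) :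
    (1 - ‖B‖) * ‖y‖ ≤ ‖adjoint (I + B) y‖ := by
  have hB : ‖adjoint B y‖ ≤ ‖B‖ * ‖y‖ := by
    simpa only [LinearIsometryEquiv.norm_map] using (adjoint B).le_opNorm y
  calc (1 - ‖B‖) * ‖y‖ ≤ ‖adjoint I y‖ - ‖adjoint B y‖ := by rw [hI]; linarith
    _ ≤ ‖adjoint I y + adjoint B y‖ := norm_sub_le_norm_add _ _
    _ = ‖adjoint (I + B) y‖ := by rw [map_add, add_apply]

theorem one_sub_opNorm_le_sminAdj_add {n m : ℕ} (hm : 0 < m)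
    {I : EuclideanSpace ℝ (Fin n) →L[ℝ] EuclideanSpace ℝ (Fin m)}
    (hI : ∀ y, ‖adjoint I y‖ = ‖y‖) (B : EuclideanSpace ℝ (Fin n) →L[ℝ] EuclideanSpace ℝ (Fin m)) :
    1 - ‖B‖ ≤ sminAdj (I + B) :=
  le_sminAdj hm fun y hy => by
    simpa [hy] using one_sub_opNorm_mul_norm_le_norm_adjoint_add_apply hI B y

theorem stmt8_general {p d₀ d₁ : ℕ} (hd₁ : 0 < d₁) (δ : ℝ)
    (I : EuclideanSpace ℝ (Fin d₀) →L[ℝ] EuclideanSpace ℝ (Fin d₁))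
    (hI : ∀ y, ‖ContinuousLinearMap.adjoint I y‖ = ‖y‖)  -- all singular values of `I` equal 1
    (g : EuclideanSpace ℝ (Fin p) → EuclideanSpace ℝ (Fin d₀) → EuclideanSpace ℝ (Fin d₁))
    (hg : ∀ θ, Differentiable ℝ (g θ))
    (hJg : ∀ θ x, ‖fderiv ℝ (g θ) x‖ < 1 - δ) :
    ∀ θ x, δ < sminAdj (fderiv ℝ (fun x => I x + g θ x) x) := by
  intro θ x
  have hJf : fderiv ℝ (fun x => I x + g θ x) x = I + fderiv ℝ (g θ) x := by
    rw [fderiv_fun_add I.differentiableAt (hg θ x), I.fderiv]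
  rw [hJf]
  linarith [hJg θ x, one_sub_opNorm_le_sminAdj_add hd₁ hI (fderiv ℝ (g θ) x)]

theorem stmt8 {p d₀ d₁ : ℕ} (hd₁ : 0 < d₁) (hd : d₁ ≤ d₀) (δ : ℝ) (hδ : 0 < δ)
    (I : EuclideanSpace ℝ (Fin d₀) →L[ℝ] EuclideanSpace ℝ (Fin d₁))
    (hI : ∀ y, ‖ContinuousLinearMap.adjoint I y‖ = ‖y‖)  -- all singular values of `I` equal 1
    (g : EuclideanSpace ℝ (Fin p) → EuclideanSpace ℝ (Fin d₀) → EuclideanSpace ℝ (Fin d₁))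
    (hg : ∀ θ, Differentiable ℝ (g θ))
    (hJg : ∀ θ x, ‖fderiv ℝ (g θ) x‖ < 1 - δ) :
    ∀ θ x, δ < sminAdj (fderiv ℝ (fun x => I x + g θ x) x) :=
  stmt8_general hd₁ δ I hI g hg hJg
end

section
/- Let C, ε > 0 and η > 0, and consider the Euler iterates r₀ = 1, r_{t+1} = r_t + η C ε r_t^{−3} for the vector field V(r) = Cε r^{−3} on [1, ∞). Then there exist constants γ₁, γ₂ > 0 and γ₃ ≥ 0 such that 1 ≤ r_t ≤ γ₁ + γ₂ (t + γ₃)^{1/4} for all t ∈ ℕ. -/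
/-!
Along the Euler scheme the quantity `r ^ 4` grows by at most a constant per step: writing
`y = b / r ^ 3`, every term `r ^ (4 - k) * y ^ k` (`k ≥ 1`) of the binomial expansion of
`(r + y) ^ 4 - r ^ 4` equals `b ^ k * r ^ (4 - 4k) ≤ b ^ k` because `r ≥ 1`. Hence
`r_t ^ 4 ≤ 1 + ((1 + b) ^ 4 - 1) t`, and taking fourth roots gives the `t ^ (1/4)` growth.
-/

lemma add_div_pow_three_pow_four_le {x b : ℝ} (hx : 1 ≤ x) (hb : 0 ≤ b) :
    (x + b / x ^ 3) ^ 4 ≤ x ^ 4 + ((1 + b) ^ 4 - 1) := by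
  set y := b / x ^ 3
  have hy : 0 ≤ y := by positivity
  have hxy : x ^ 3 * y = b := mul_div_cancel₀ b (by positivity)
  have hyb : y ≤ b := div_le_self hb (one_le_pow₀ hx)
  have hyx : y ≤ b * x := by nlinarith
  have h2 : x ^ 2 * y ^ 2 ≤ b ^ 2 := by nlinarith
  have h3 : x * y ^ 3 ≤ b ^ 3 := by nlinarith
  have h4 : y ^ 4 ≤ b ^ 4 := pow_le_pow_left₀ hy hyb 4
  calc (x + y) ^ 4
      = x ^ 4 + 4 * (x ^ 3 * y) + 6 * (x ^ 2 * y ^ 2) + 4 * (x * y ^ 3) + y ^ 4 := by ring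
    _ ≤ x ^ 4 + ((1 + b) ^ 4 - 1) := by rw [hxy]; nlinarith

lemma le_rpow_inv_of_pow_le {x a : ℝ} {n : ℕ} (hx : 0 ≤ x) (hn : n ≠ 0) (h : x ^ n ≤ a) :
    x ≤ a ^ (n : ℝ)⁻¹ :=
  (Real.le_rpow_inv_iff_of_pos hx ((pow_nonneg hx n).trans h) (by positivity)).2 (by simpa)

section EulerScheme

variable {b : ℝ} {r : ℕ → ℝ} (h0 : r 0 = 1) (hstep : ∀ t, r (t + 1) = r t + b / r t ^ 3)
include h0 hstep

lemma one_le_euler_iterate (hb : 0 ≤ b) (t : ℕ) : 1 ≤ r t := by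
  induction t with
  | zero => rw [h0]
  | succ n ih =>
    rw [hstep n]
    have : 0 ≤ b / r n ^ 3 := by positivity
    linarith

lemma euler_iterate_pow_four_le (hb : 0 ≤ b) (t : ℕ) :
    r t ^ 4 ≤ 1 + ((1 + b) ^ 4 - 1) * t := by
  induction t with
  | zero => simp [h0]
  | succ n ih =>
    rw [hstep n]
    push_cast
    linarith [add_div_pow_three_pow_four_le (one_le_euler_iterate h0 hstep hb n) hb]

end EulerScheme

theorem stmt14 (C ε η : ℝ) (hC : 0 < C) (hε : 0 < ε) (hη : 0 < η)
    (r : ℕ → ℝ) (h0 : r 0 = 1)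
    (hstep : ∀ t, r (t + 1) = r t + η * C * ε / r t ^ 3) :
    ∃ γ₁ γ₂ γ₃ : ℝ, 0 < γ₁ ∧ 0 < γ₂ ∧ 0 ≤ γ₃ ∧
      ∀ t : ℕ, 1 ≤ r t ∧ r t ≤ γ₁ + γ₂ * ((t : ℝ) + γ₃) ^ ((1 : ℝ) / 4) := by
  set b := η * C * ε
  have hb : 0 < b := by positivity
  set K := (1 + b) ^ 4 - 1
  have hK : 0 < K := by
    have : 1 < (1 + b) ^ 4 := one_lt_pow₀ (by linarith) (by norm_num)
    linarith
  refine ⟨1, K ^ ((1 : ℝ) / 4), 1 / K, one_pos, by positivity, by positivity, fun t => ?_⟩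
  have hr : 1 ≤ r t := one_le_euler_iterate h0 hstep hb.le t
  refine ⟨hr, ?_⟩
  have hfactor : 1 + K * t = K * ((t : ℝ) + 1 / K) := by field_simp; ring
  have hroot := le_rpow_inv_of_pow_le (by linarith) (by norm_num : 4 ≠ 0)
    (hfactor ▸ euler_iterate_pow_four_le h0 hstep hb.le t)
  rw [Real.mul_rpow hK.le (by positivity)] at hroot
  norm_num at hroot ⊢
  linarith
end
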